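/- arXiv:2310.10272 — 3 statements merged into one kernel-verified Lean document; each statement's English description precedes it below -/
import Mathlib

section
/- Let 0 < σ < exp(2(1-N)/N) and f_σ(x) = σ^{-N} exp(-|x|²/σ²). There exists δ > 0 such that for every point s₀ ∈ ℝ^N with |s₀| = δ and for n = -s₀/|s₀|, one has (N-1)/δ - (∇f_σ(s₀)·n) / (2(1 + f_σ(s₀))) < 0. -/
/-!
Take `δ = σ √N`. On the sphere `‖s₀‖ = δ` we have `‖s₀‖² / σ² = N`, so
`f_σ(s₀) = v := e^{-N} / σ^N` and `∇f_σ(s₀) · n = 2 v δ / σ²`; after multiplying out, the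
inequality becomes `N - 1 < v`. This holds because `σ^N < e^{2(1-N)}` and `N - 1 ≤ e^{N-2}`.
-/

open Real InnerProductSpace

theorem hasGradientAt_exp_neg_norm_sq_div {E : Type*} [NormedAddCommGroup E]
    [InnerProductSpace ℝ E] [CompleteSpace E] (σ c : ℝ) (x : E) :
    HasGradientAt (fun y : E => exp (-‖y‖ ^ 2 / σ ^ 2) / c)
      ((-2 * exp (-‖x‖ ^ 2 / σ ^ 2) / (c * σ ^ 2)) • x) x := by
  have hf : (fun y : E => exp (-‖y‖ ^ 2 / σ ^ 2) / c)
      = fun y => c⁻¹ * exp (-(σ ^ 2)⁻¹ * ‖y‖ ^ 2) := by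
    funext y
    rw [div_eq_inv_mul, neg_div, div_eq_inv_mul, neg_mul]
  rw [hasGradientAt_iff_hasFDerivAt, hf]
  refine ((((hasStrictFDerivAt_norm_sq x).hasFDerivAt.const_mul (-(σ ^ 2)⁻¹)).exp).const_mul
    c⁻¹).congr_fderiv ?_
  ext y
  simp only [neg_mul, neg_smul, smul_neg, neg_apply, smul_apply, coe_innerSL_apply, nsmul_eq_mul,
    Nat.cast_ofNat, smul_eq_mul, div_eq_mul_inv, mul_comm (‖x‖ ^ 2), mul_inv_rev, map_neg, map_smul,
    toDual_apply_apply, neg_inj]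
  ring

theorem inner_smul_neg_normalize {E : Type*} [NormedAddCommGroup E] [InnerProductSpace ℝ E]
    (a : ℝ) {x : E} (hx : x ≠ 0) : inner ℝ (a • x) (-(‖x‖⁻¹) • x) = -a * ‖x‖ := by
  rw [real_inner_smul_left, real_inner_smul_right, real_inner_self_eq_norm_sq]
  field_simp [norm_ne_zero_iff.mpr hx]

theorem natCast_sub_one_lt_exp_neg_div_pow {N : ℕ} (hN : 1 ≤ N) {σ : ℝ} (hσ0 : 0 < σ)
    (hσ : σ < exp (2 * (1 - (N : ℝ)) / N)) : (N : ℝ) - 1 < exp (-N) / σ ^ N := by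
  have hσN : σ ^ N < exp (2 * (1 - (N : ℝ))) := by
    calc σ ^ N < exp (2 * (1 - (N : ℝ)) / N) ^ N := pow_lt_pow_left₀ hσ hσ0.le (by omega)
      _ = exp (2 * (1 - (N : ℝ))) := by
        rw [← exp_nat_mul]
        field_simp
  rw [lt_div_iff₀ (by positivity)]
  calc ((N : ℝ) - 1) * σ ^ N < exp (N - 2) * exp (2 * (1 - (N : ℝ))) :=
        mul_lt_mul' (by linarith [add_one_le_exp ((N : ℝ) - 2)]) hσN (by positivity)
          (exp_pos _)
    _ = exp (-N) := by rw [← exp_add]; ring_nf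

open Real in
/-- For `σ < exp(2(1-N)/N)` and `f_σ(x) = σ^{-N} exp(-|x|²/σ²)`, there is a distance
`δ > 0` at which the Gaussian repulsion dominates the curvature bound: for every `s₀`
with `|s₀| = δ` and inner normal `n = -s₀/|s₀|`,
`(N-1)/δ - (∇f_σ(s₀)·n)/(2(1+f_σ(s₀))) < 0`. -/
theorem stmt_5 (N : ℕ) (hN : 1 ≤ N) (σ : ℝ) (hσ0 : 0 < σ)
    (hσ : σ < exp (2 * (1 - (N : ℝ)) / N)) :
    let fσ : EuclideanSpace ℝ (Fin N) → ℝ := fun x => exp (-‖x‖^2 / σ^2) / σ^N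
    ∃ δ > 0, ∀ s₀ : EuclideanSpace ℝ (Fin N), ‖s₀‖ = δ →
      ((N : ℝ) - 1) / δ -
        (inner ℝ (gradient fσ s₀) (-(‖s₀‖⁻¹) • s₀) : ℝ) / (2 * (1 + fσ s₀)) < 0 := by
  intro fσ
  have hNpos : (0 : ℝ) < N := by exact_mod_cast hN
  refine ⟨σ * √N, by positivity, fun s₀ hs => ?_⟩
  have hs₀ : s₀ ≠ 0 := by
    rw [← norm_pos_iff, hs]
    positivity
  have hsq : ‖s₀‖ ^ 2 = σ ^ 2 * N := by rw [hs, mul_pow, sq_sqrt hNpos.le]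
  have hexp : -‖s₀‖ ^ 2 / σ ^ 2 = -N := by
    rw [hsq]
    field_simp
  rw [← hs, (hasGradientAt_exp_neg_norm_sq_div σ (σ ^ N) s₀).gradient,
    inner_smul_neg_normalize _ hs₀]
  simp only [fσ, hexp]
  set v := exp (-N) / σ ^ N with hv_def
  have hv : (N : ℝ) - 1 < v := natCast_sub_one_lt_exp_neg_div_pow hN hσ0 hσ
  have hinner : -(-2 * exp (-N) / (σ ^ N * σ ^ 2)) * ‖s₀‖ * ‖s₀‖ = 2 * v * N := by
    rw [mul_assoc, ← sq, hsq, hv_def]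
    field_simp
  rw [sub_neg, div_lt_div_iff₀ (norm_pos_iff.mpr hs₀) (by positivity), hinner]
  linarith
end

section
/- Let w : [0,∞) → ℝ be C¹ with w(0) = 0, 0 ≤ w ≤ 1, w' integrable, and lim_{x→∞} w(x) = 1. For σ > 0 define n^σ : ℝ^N \ {0} → ℝ^N by n^σ(x) = -w(|x|/σ)·x/|x|. Then the skeletal term satisfies S n^σ(x) := ⟨n^σ(x), (Dn^σ(x))ᵀ n^σ(x)⟩ = -(1/σ)·w(|x|/σ)²·w'(|x|/σ) for all x ≠ 0. -/
/-!
Write `n^σ(x) = (ψ ‖x‖ / ‖x‖) • x` with `ψ t = -w (t / σ)`. For such a radial field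
`F x = φ(‖x‖) x` the Jacobian is `DF(x) = φ(r) id + (φ'(r) / r) x ⊗ x`, `r = ‖x‖`; since `F x` is
parallel to `x`, `⟨F x, DF(x) (F x)⟩ = φ³ r² + φ² φ' r³`, which for `φ t = ψ t / t`
collapses to `ψ(r)² ψ'(r)`: the angular part `x / ‖x‖` contributes nothing.
-/

open scoped RealInnerProductSpace

variable {E : Type*} [NormedAddCommGroup E] [InnerProductSpace ℝ E]

theorem hasFDerivAt_norm_of_ne_zero {x : E} (hx : x ≠ 0) :
    HasFDerivAt (‖·‖) (‖x‖⁻¹ • innerSL ℝ x) x := by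
  have hsqrt := (hasStrictFDerivAt_norm_sq x).hasFDerivAt.sqrt (by positivity)
  simp only [Real.sqrt_sq (norm_nonneg _)] at hsqrt
  convert hsqrt using 1
  rw [two_smul, ← two_smul ℝ, smul_smul]
  congr 1
  field_simp

theorem hasFDerivAt_comp_norm_smul {φ : ℝ → ℝ} {φ' : ℝ} {x : E} (hx : x ≠ 0)
    (hφ : HasDerivAt φ φ' ‖x‖) :
    HasFDerivAt (fun y => φ ‖y‖ • y)
      (φ ‖x‖ • ContinuousLinearMap.id ℝ E + (φ' • ‖x‖⁻¹ • innerSL ℝ x).smulRight x) x :=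
  (hφ.comp_hasFDerivAt x (hasFDerivAt_norm_of_ne_zero hx)).smul (hasFDerivAt_id x)

theorem inner_radial_fderiv_radial {ψ : ℝ → ℝ} {ψ' : ℝ} {x : E} (hx : x ≠ 0)
    (hψ : HasDerivAt ψ ψ' ‖x‖) :
    ⟪(ψ ‖x‖ / ‖x‖) • x, fderiv ℝ (fun y => (ψ ‖y‖ / ‖y‖) • y) x ((ψ ‖x‖ / ‖x‖) • x)⟫ =
      ψ ‖x‖ ^ 2 * ψ' := by
  have hr : ‖x‖ ≠ 0 := norm_ne_zero_iff.2 hx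
  rw [(hasFDerivAt_comp_norm_smul (φ := fun t => ψ t / t) hx
    (hψ.div (hasDerivAt_id' _) hr)).fderiv]
  simp only [add_apply, smul_apply, ContinuousLinearMap.id_apply,
    ContinuousLinearMap.smulRight_apply, innerSL_apply_apply, inner_add_right,
    real_inner_smul_left, real_inner_smul_right, real_inner_self_eq_norm_sq, smul_eq_mul,
    norm_smul, Real.norm_eq_abs, mul_pow, sq_abs]
  field_simp
  ring

theorem stmt_10_general (N : ℕ) (σ : ℝ)
    (w : ℝ → ℝ) (hw : ContDiff ℝ 1 w) :
    let nσ : EuclideanSpace ℝ (Fin N) → EuclideanSpace ℝ (Fin N) :=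
      fun x => -(w (‖x‖ / σ) / ‖x‖) • x
    ∀ x : EuclideanSpace ℝ (Fin N), x ≠ 0 →
      (inner ℝ (nσ x) (fderiv ℝ nσ x (nσ x)) : ℝ)
        = -(1/σ) * w (‖x‖ / σ)^2 * deriv w (‖x‖ / σ) := by
  intro nσ x hx
  have hψ : HasDerivAt (fun t => -w (t / σ)) (-(deriv w (‖x‖ / σ) * (1 / σ))) ‖x‖ :=
    ((hw.differentiable one_ne_zero _).hasDerivAt.comp _
      ((hasDerivAt_id' _).div_const σ)).neg
  have hnσ : nσ = fun y => (-w (‖y‖ / σ) / ‖y‖) • y := by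
    funext y
    simp only [nσ, neg_div]
  rw [hnσ, inner_radial_fderiv_radial hx hψ]
  ring

/-- For a `C¹` profile `w` with `w(0) = 0`, `0 ≤ w ≤ 1` on `[0,∞)`, integrable derivative and
`w(∞) = 1`, the radial field `n^σ(x) = -w(|x|/σ) x/|x|` has skeletal term
`S n^σ(x) = ⟨n^σ(x), (Dn^σ(x))ᵀ n^σ(x)⟩ = -(1/σ) w(|x|/σ)² w'(|x|/σ)` for all `x ≠ 0`. -/
theorem stmt_10 (N : ℕ) (σ : ℝ) (hσ : 0 < σ)
    (w : ℝ → ℝ) (hw : ContDiff ℝ 1 w) (hw0 : w 0 = 0)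
    (hwbd : ∀ x ≥ (0:ℝ), 0 ≤ w x ∧ w x ≤ 1)
    (hw' : MeasureTheory.Integrable (deriv w))
    (hwlim : Filter.Tendsto w Filter.atTop (nhds 1)) :
    let nσ : EuclideanSpace ℝ (Fin N) → EuclideanSpace ℝ (Fin N) :=
      fun x => -(w (‖x‖ / σ) / ‖x‖) • x
    ∀ x : EuclideanSpace ℝ (Fin N), x ≠ 0 →
      (inner ℝ (nσ x) (fderiv ℝ nσ x (nσ x)) : ℝ)
        = -(1/σ) * w (‖x‖ / σ)^2 * deriv w (‖x‖ / σ) :=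
  stmt_10_general N σ w hw
end

section
/- Let Ω ⊂ ℝ^N be open with nonempty compact boundary, let d(x) = dist(x, ∂Ω), and suppose x ∉ ∂Ω is such that there exist two distinct points y₁ ≠ y₂ ∈ ∂Ω with |x - y₁| = |x - y₂| = d(x). Then d is not differentiable at x. -/
/-!
The distance function `d` to a set is `1`-Lipschitz, so a derivative `f` of `d` at `x` has
`‖f‖ ≤ 1`. Along the segment from `x` to a nearest point `y`, `d` drops at unit speed, which
forces `f (y - x) ≤ -‖y - x‖`. For two nearest points `y₁, y₂` at distance `d x` this gives
`2 d x ≤ -f (v₁ + v₂) ≤ ‖v₁ + v₂‖` with `vᵢ = yᵢ - x`, i.e. equality in the triangle inequality,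
and strict convexity of the norm yields `y₁ = y₂`.
-/

open Metric Set

variable {E : Type*} [NormedAddCommGroup E] [NormedSpace ℝ E]

theorem HasFDerivAt.apply_le_neg_of_le_sub_mul {g : E → ℝ} {g' : E →L[ℝ] ℝ} {x v : E} {c : ℝ}
    (hg : HasFDerivAt g g' x) (hdecr : ∀ t ∈ Ioc (0 : ℝ) 1, g (x + t • v) ≤ g x - t * c) :
    g' v ≤ -c := by
  refine le_of_tendsto (hg.hasLineDerivAt v).tendsto_slope_zero_right ?_
  filter_upwards [Ioc_mem_nhdsGT zero_lt_one] with t ht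
  rw [smul_eq_mul, inv_mul_le_iff₀ ht.1]
  linarith [hdecr t ht]

theorem HasFDerivAt.infDist_apply_sub_le {s : Set E} {f : E →L[ℝ] ℝ} {x y : E}
    (hf : HasFDerivAt (infDist · s) f x) (hy : y ∈ s) (hxy : dist x y = infDist x s) :
    f (y - x) ≤ -dist x y := by
  refine hf.apply_le_neg_of_le_sub_mul fun t ht ↦ ?_
  calc infDist (x + t • (y - x)) s ≤ dist (AffineMap.lineMap x y t) y := by
        rw [AffineMap.lineMap_apply_module', add_comm]
        exact infDist_le_dist_of_mem hy
    _ = infDist x s - t * dist x y := by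
        rw [dist_lineMap_right, Real.norm_of_nonneg (sub_nonneg.2 ht.2), ← hxy]
        ring

theorem eq_of_dist_eq_infDist_of_differentiableAt [StrictConvexSpace ℝ E] {s : Set E}
    {x y₁ y₂ : E} (hd : DifferentiableAt ℝ (infDist · s) x) (hy₁ : y₁ ∈ s) (hy₂ : y₂ ∈ s)
    (h₁ : dist x y₁ = infDist x s) (h₂ : dist x y₂ = infDist x s) : y₁ = y₂ := by
  set f := fderiv ℝ (infDist · s) x
  have hf := hd.hasFDerivAt
  have hf₁ := hf.infDist_apply_sub_le hy₁ h₁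
  have hf₂ := hf.infDist_apply_sub_le hy₂ h₂
  have hnorm : ‖f‖ ≤ 1 := by simpa using hf.le_of_lipschitz (lipschitz_infDist_pt s)
  rw [dist_eq_norm'] at h₁ h₂
  have : ‖(y₁ - x) + (y₂ - x)‖ = ‖y₁ - x‖ + ‖y₂ - x‖ := by
    refine le_antisymm (norm_add_le _ _) ?_
    calc ‖y₁ - x‖ + ‖y₂ - x‖ ≤ -f ((y₁ - x) + (y₂ - x)) := by
          rw [map_add, ← dist_eq_norm', ← dist_eq_norm']; linarith
      _ ≤ ‖f‖ * ‖(y₁ - x) + (y₂ - x)‖ := (neg_le_abs _).trans (f.le_opNorm _)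
      _ ≤ ‖(y₁ - x) + (y₂ - x)‖ := mul_le_of_le_one_left (norm_nonneg _) hnorm
  exact sub_left_injective (eq_of_norm_eq_of_norm_add_eq (h₁.trans h₂.symm) this)

theorem stmt_18_general (N : ℕ) (Ω : Set (EuclideanSpace ℝ (Fin N)))
    (x : EuclideanSpace ℝ (Fin N))
    (y₁ y₂ : EuclideanSpace ℝ (Fin N)) (hy₁ : y₁ ∈ frontier Ω) (hy₂ : y₂ ∈ frontier Ω)
    (hne : y₁ ≠ y₂)
    (hmin₁ : dist x y₁ = Metric.infDist x (frontier Ω))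
    (hmin₂ : dist x y₂ = Metric.infDist x (frontier Ω)) :
    ¬ DifferentiableAt ℝ (fun z => Metric.infDist z (frontier Ω)) x :=
  fun hd ↦ hne (eq_of_dist_eq_infDist_of_differentiableAt hd hy₁ hy₂ hmin₁ hmin₂)

/-- If `x ∉ ∂Ω` has two distinct nearest points on the (compact nonempty) boundary of an
open set `Ω`, the distance function to `∂Ω` is not differentiable at `x`. -/
theorem stmt_18 (N : ℕ) (Ω : Set (EuclideanSpace ℝ (Fin N)))
    (hΩ : IsOpen Ω) (hfr : (frontier Ω).Nonempty) (hcomp : IsCompact (frontier Ω))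
    (x : EuclideanSpace ℝ (Fin N)) (hx : x ∉ frontier Ω)
    (y₁ y₂ : EuclideanSpace ℝ (Fin N)) (hy₁ : y₁ ∈ frontier Ω) (hy₂ : y₂ ∈ frontier Ω)
    (hne : y₁ ≠ y₂)
    (hmin₁ : dist x y₁ = Metric.infDist x (frontier Ω))
    (hmin₂ : dist x y₂ = Metric.infDist x (frontier Ω)) :
    ¬ DifferentiableAt ℝ (fun z => Metric.infDist z (frontier Ω)) x :=
  stmt_18_general N Ω x y₁ y₂ hy₁ hy₂ hne hmin₁ hmin₂
end
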